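/- arXiv:1304.1043 — 4 statements merged into one kernel-verified Lean document; each statement's English description precedes it below -/
import Mathlib

section
/- Let a be a positive integer. Every solution in positive integers (x, y) of the Pell equation x² − (a²+2a)y² = 4 is of the form (x, y) = (V_n(2a+2,−1), 2·U_n(2a+2,−1)) for some integer n ≥ 1. -/
/-- The generalized Fibonacci sequence `U n (k, s)`:
`U₀ = 0`, `U₁ = 1`, `U_{n+1} = k·U_n + s·U_{n−1}`. -/
def genFib (k s : ℤ) : ℕ → ℤ
  | 0 => 0
  | 1 => 1
  | n + 2 => k * genFib k s (n + 1) + s * genFib k s n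

/-- The generalized Lucas sequence `V n (k, s)`:
`V₀ = 2`, `V₁ = k`, `V_{n+1} = k·V_n + s·V_{n−1}`. -/
def genLucas (k s : ℤ) : ℕ → ℤ
  | 0 => 2
  | 1 => k
  | n + 2 => k * genLucas k s (n + 1) + s * genLucas k s n

lemma gen_id (k s : ℤ) : ∀ n : ℕ,
    2 * genLucas k s (n+1) = k * genLucas k s n + (k^2+4*s) * genFib k s n ∧
    2 * genFib k s (n+1) = k * genFib k s n + genLucas k s n := by
  intro n
  induction n using Nat.twoStepInduction with
  | zero => constructor <;> simp [genFib, genLucas] <;> ring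
  | one => constructor <;> simp [genFib, genLucas] <;> ring
  | more n ih1 ih2 =>
    obtain ⟨h1, h2⟩ := ih1
    obtain ⟨h3, h4⟩ := ih2
    have e1 : genLucas k s (n+2+1) = k * genLucas k s (n+1+1) + s * genLucas k s (n+1) := rfl
    have e2 : genLucas k s (n+1+1) = k * genLucas k s (n+1) + s * genLucas k s n := rfl
    have f0 : genFib k s (n+2+1) = k * genFib k s (n+1+1) + s * genFib k s (n+1) := rfl
    have f1 : genFib k s (n+1+1) = k * genFib k s (n+1) + s * genFib k s n := rfl
    constructor
    · linear_combination 2*e1 - k*e2 - (k^2+4*s)*f1 + k*h3 + s*h1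
    · linear_combination 2*f0 - k*f1 - e2 + k*h4 + s*h2

lemma pell_descent (a : ℤ) (ha : 0 < a) : ∀ N : ℕ, ∀ x y : ℤ,
    0 < x → 0 < y → y ≤ (N : ℤ) → x ^ 2 - (a ^ 2 + 2 * a) * y ^ 2 = 4 →
    ∃ n : ℕ, 1 ≤ n ∧ x = genLucas (2 * a + 2) (-1) n ∧
      y = 2 * genFib (2 * a + 2) (-1) n := by
  intro N
  induction N with
  | zero => intro x y hx hy hN h; exfalso; omega
  | succ N ih =>
    intro x y hx hy hN h
    rcases lt_or_ge y 3 with hy3 | hy3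
    · have hy12 : y = 1 ∨ y = 2 := by omega
      rcases hy12 with rfl | rfl
      · exfalso
        have h1 : x ^ 2 = a ^ 2 + 2 * a + 4 := by linarith
        have h2 : a + 1 < x := by nlinarith
        have h3 : a + 2 ≤ x := by omega
        nlinarith
      · have h1 : x = 2 * a + 2 := by
          have h2 : (x - (2 * a + 2)) * (x + (2 * a + 2)) = 0 := by ring_nf; nlinarith [h]
          rcases mul_eq_zero.mp h2 with h3 | h3 <;> [linarith; nlinarith]
        refine ⟨1, le_refl 1, ?_, ?_⟩ <;> simp [genFib, genLucas, h1]
    · -- descent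
      set x' := (a + 1) * x - (a ^ 2 + 2 * a) * y with hx'def
      set y' := (a + 1) * y - x with hy'def
      have h' : x' ^ 2 - (a ^ 2 + 2 * a) * y' ^ 2 = 4 := by
        rw [hx'def, hy'def]; linear_combination h
      have hy'pos : 0 < y' := by
        rw [hy'def]
        by_contra hc
        push_neg at hc
        have hxy : (a + 1) * y ≤ x := by linarith
        have h9 : 9 ≤ y * y := by nlinarith
        nlinarith [mul_le_mul hxy hxy (by nlinarith : (0:ℤ) ≤ (a + 1) * y) hx.le]
      have hx'pos : 0 < x' := by
        rw [hx'def]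
        by_contra hc
        push_neg at hc
        have hd : (a + 1) * x ≤ (a ^ 2 + 2 * a) * y := by linarith
        nlinarith [mul_le_mul hd hd (by nlinarith : (0:ℤ) ≤ (a + 1) * x) (by nlinarith : (0:ℤ) ≤ (a ^ 2 + 2 * a) * y)]
      have hy'lt : y' < y := by
        rw [hy'def]
        by_contra hc
        push_neg at hc
        have hd : x ≤ a * y := by linarith
        nlinarith [mul_le_mul hd hd hx.le (by nlinarith : (0:ℤ) ≤ a * y)]
      obtain ⟨n, hn1, hxn, hyn⟩ := ih x' y' hx'pos hy'pos (by omega) h'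
      refine ⟨n + 1, by omega, ?_, ?_⟩
      · have := (gen_id (2 * a + 2) (-1) n).1
        have hrec : x = (a + 1) * x' + (a ^ 2 + 2 * a) * y' := by
          rw [hx'def, hy'def]; ring
        rw [hrec, hxn, hyn]
        linarith [this]
      · have := (gen_id (2 * a + 2) (-1) n).2
        have hrec : y = (a + 1) * y' + x' := by
          rw [hx'def, hy'def]; ring
        rw [hrec, hxn, hyn]
        linarith [this]


/-- Every positive integer solution `(x, y)` of `x² − (a²+2a)y² = 4` is of the form
`(V_n(2a+2,−1), 2·U_n(2a+2,−1))` for some `n ≥ 1`. -/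
theorem pell_four_solutions_are_lucas (a : ℤ) (ha : 0 < a) (x y : ℤ)
    (hx : 0 < x) (hy : 0 < y) (h : x ^ 2 - (a ^ 2 + 2 * a) * y ^ 2 = 4) :
    ∃ n : ℕ, 1 ≤ n ∧ x = genLucas (2 * a + 2) (-1) n ∧
      y = 2 * genFib (2 * a + 2) (-1) n := by
  exact pell_descent a ha y.toNat x y hx hy (by omega) h
end

section
/- For every integer a > 2, the Pell equation x² − (a²+2a)y² = −4 has no solutions in positive integers x, y. -/
/-- For every integer `a > 2`, the equation `x² − (a²+2a)y² = −4` has no solutions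
in positive integers. -/
theorem pell_neg_four_no_solution (a : ℤ) (ha : 2 < a) :
    ¬ ∃ x y : ℤ, 0 < x ∧ 0 < y ∧ x ^ 2 - (a ^ 2 + 2 * a) * y ^ 2 = -4 := by
  rintro ⟨x, y, hx, hy, h⟩
  have key : ∀ n : ℕ, ∀ x y : ℤ, 0 < x → 0 < y → y.toNat ≤ n →
      x ^ 2 - (a ^ 2 + 2 * a) * y ^ 2 ≠ -4 := by
    intro n
    induction n with
    | zero => intro x y hx hy hle _; omega
    | succ n ih =>
      intro x y hx hy hle h
      have h1 : a * y < x := by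
        have hsq : (a * y) ^ 2 < x ^ 2 := by nlinarith
        exact lt_of_pow_lt_pow_left₀ 2 (le_of_lt hx) hsq
      have h2 : x < (a + 1) * y := by
        have hsq : x ^ 2 < ((a + 1) * y) ^ 2 := by nlinarith
        exact lt_of_pow_lt_pow_left₀ 2 (by nlinarith) hsq
      set x' := (a + 1) * x - (a ^ 2 + 2 * a) * y with hx'
      set y' := (a + 1) * y - x with hy'
      have hy'pos : 0 < y' := by simp only [hy']; linarith
      have hy'lt : y' < y := by simp only [hy']; linarith
      have heq : x' ^ 2 - (a ^ 2 + 2 * a) * y' ^ 2 = -4 := by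
        simp only [hx', hy']; linear_combination h
      have hx'ne : x' ≠ 0 := by
        intro h0
        rw [h0] at heq
        nlinarith
      exact ih |x'| y' (abs_pos.mpr hx'ne) hy'pos (by omega)
        (by rw [sq_abs]; exact heq)
  exact key y.toNat x y hx hy le_rfl h
end

section
/- Let d be a positive integer that is not a perfect square, and suppose (x₁, y₁) is the fundamental solution of x² − d·y² = 4 (i.e., a positive integer solution with minimal x₁). Then for every n ≥ 1 there exist positive integers x_n, y_n with x_n² − d·y_n² = 4 and x_n + y_n√d = (x₁ + y₁√d)ⁿ / 2ⁿ⁻¹ (as real numbers), and every positive integer solution of x² − d·y² = 4 arises this way for some n ≥ 1. -/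
lemma pell4_parity (d x y x' y' : ℤ) (h : x^2 - d*y^2 = 4) (h' : x'^2 - d*y'^2 = 4) :
    2 ∣ (x*x' + d*y*y') ∧ 2 ∣ (x*y' + x'*y) := by
  set ψ : ZMod 4 →+* ZMod 2 := ZMod.castHom (show (2:ℕ) ∣ 4 by norm_num) (ZMod 2) with hψ
  have h40 : (4 : ZMod 4) = 0 := by decide
  have h4 : ((x:ZMod 4))^2 = (d:ZMod 4)*(y:ZMod 4)^2 := by
    have := congrArg (Int.cast : ℤ → ZMod 4) h
    push_cast at this
    linear_combination this + h40
  have h4' : ((x':ZMod 4))^2 = (d:ZMod 4)*(y':ZMod 4)^2 := by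
    have := congrArg (Int.cast : ℤ → ZMod 4) h'
    push_cast at this
    linear_combination this + h40
  have claim : ∀ a b c e D : ZMod 4, a^2 = D*b^2 → c^2 = D*e^2 →
      ψ (a*c + D*b*e) = 0 ∧ ψ (a*e + c*b) = 0 := by decide
  obtain ⟨c1, c2⟩ := claim (x:ZMod 4) (y:ZMod 4) (x':ZMod 4) (y':ZMod 4) (d:ZMod 4) h4 h4'
  constructor
  · have hz : ((x*x' + d*y*y' : ℤ) : ZMod 2) = 0 := by
      rw [(map_intCast ψ (x*x' + d*y*y')).symm]; push_cast
      linear_combination c1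
    exact_mod_cast (ZMod.intCast_zmod_eq_zero_iff_dvd _ 2).mp hz
  · have hz : ((x*y' + x'*y : ℤ) : ZMod 2) = 0 := by
      rw [(map_intCast ψ (x*y' + x'*y)).symm]; push_cast
      linear_combination c2
    exact_mod_cast (ZMod.intCast_zmod_eq_zero_iff_dvd _ 2).mp hz

/-- Let `d` be a positive nonsquare integer and `(x₁, y₁)` the fundamental solution of
`x² − dy² = 4` (a positive integer solution with minimal `x₁`). Then for every `n ≥ 1`
there is a positive integer solution `(xₙ, yₙ)` with
`xₙ + yₙ√d = (x₁ + y₁√d)ⁿ / 2ⁿ⁻¹`, and every positive integer solution arises this way. -/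
theorem pell_four_all_solutions (d : ℤ) (hd : 0 < d) (hds : ¬ IsSquare d)
    (x₁ y₁ : ℤ) (hx₁ : 0 < x₁) (hy₁ : 0 < y₁) (h₁ : x₁ ^ 2 - d * y₁ ^ 2 = 4)
    (hmin : ∀ x y : ℤ, 0 < x → 0 < y → x ^ 2 - d * y ^ 2 = 4 → x₁ ≤ x) :
    (∀ n : ℕ, 1 ≤ n → ∃ x y : ℤ, 0 < x ∧ 0 < y ∧ x ^ 2 - d * y ^ 2 = 4 ∧
      (x : ℝ) + (y : ℝ) * Real.sqrt d =
        ((x₁ : ℝ) + (y₁ : ℝ) * Real.sqrt d) ^ n / 2 ^ (n - 1)) ∧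
    (∀ x y : ℤ, 0 < x → 0 < y → x ^ 2 - d * y ^ 2 = 4 →
      ∃ n : ℕ, 1 ≤ n ∧ (x : ℝ) + (y : ℝ) * Real.sqrt d =
        ((x₁ : ℝ) + (y₁ : ℝ) * Real.sqrt d) ^ n / 2 ^ (n - 1)) := by
  have hd0 : (0:ℝ) ≤ (d:ℝ) := by exact_mod_cast hd.le
  have hsq : Real.sqrt d ^ 2 = (d:ℝ) := Real.sq_sqrt hd0
  have hdy1 : 1 ≤ d * y₁ ^ 2 := by nlinarith
  have hx₁3 : 3 ≤ x₁ := by nlinarith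
  have h2R : (2:ℝ) ≠ 0 := by norm_num
  constructor
  · -- existence
    intro n hn
    induction n, hn using Nat.le_induction with
    | base =>
      refine ⟨x₁, y₁, hx₁, hy₁, h₁, ?_⟩
      norm_num
    | succ n hn ih =>
      obtain ⟨x, y, hx, hy, hxy, hr⟩ := ih
      obtain ⟨hdv1, hdv2⟩ := pell4_parity d x y x₁ y₁ hxy h₁
      obtain ⟨X, hX⟩ := hdv1
      obtain ⟨Y, hY⟩ := hdv2
      have hXpos : 0 < X := by
        linarith [hX, mul_pos hx hx₁, mul_pos (mul_pos hd hy) hy₁]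
      have hYpos : 0 < Y := by
        linarith [hY, mul_pos hx hy₁, mul_pos hx₁ hy]
      have h16 : (2*X)^2 - d*(2*Y)^2 = 16 := by
        rw [← hX, ← hY]
        linear_combination (x₁^2 - d*y₁^2)*hxy + 4*h₁
      have h17 : 4*(X^2 - d*Y^2) = 16 := by linear_combination h16
      have hnorm : X ^ 2 - d * Y ^ 2 = 4 := by linarith
      refine ⟨X, Y, hXpos, hYpos, hnorm, ?_⟩
      have hXr : (x:ℝ) * x₁ + d * y * y₁ = 2 * X := by
        exact_mod_cast congrArg (Int.cast : ℤ → ℝ) hX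
      have hYr : (x:ℝ) * y₁ + x₁ * y = 2 * Y := by
        exact_mod_cast congrArg (Int.cast : ℤ → ℝ) hY
      have key : ((X:ℝ) + Y * Real.sqrt d) =
          ((x:ℝ) + y * Real.sqrt d) * ((x₁:ℝ) + y₁ * Real.sqrt d) / 2 := by
        rw [eq_div_iff h2R]
        linear_combination (-1:ℝ)*hXr - Real.sqrt d * hYr - (y:ℝ)*y₁*hsq
      rw [key, hr]
      obtain ⟨m, rfl⟩ : ∃ m, n = m + 1 := ⟨n - 1, by omega⟩
      simp only [Nat.add_sub_cancel]
      rw [pow_succ]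
      ring
  · -- completeness
    have comp : ∀ N : ℕ, ∀ x y : ℤ, 0 < x → 0 < y → x ^ 2 - d * y ^ 2 = 4 → x ≤ (N:ℤ) →
        ∃ n : ℕ, 1 ≤ n ∧ (x : ℝ) + (y : ℝ) * Real.sqrt d =
          ((x₁ : ℝ) + (y₁ : ℝ) * Real.sqrt d) ^ n / 2 ^ (n - 1) := by
      intro N
      induction N with
      | zero => intro x y hx _ _ hN; omega
      | succ N IH =>
        intro x y hx hy hxy hN
        by_cases hcase : x ≤ x₁
        · have hxx : x = x₁ := le_antisymm hcase (hmin x y hx hy hxy)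
          subst hxx
          have hy2 : y ^ 2 = y₁ ^ 2 := by
            have : d * y ^ 2 = d * y₁ ^ 2 := by linarith
            exact mul_left_cancel₀ hd.ne' this
          have hyy : y = y₁ := by
            apply le_antisymm <;> nlinarith [hy2]
          subst hyy
          exact ⟨1, le_refl 1, by norm_num⟩
        · push_neg at hcase
          have hxsq : x₁^2 < x^2 := by nlinarith [hcase, hx₁]
          have hy2lt : y₁^2 < y^2 := by
            have h10 : d*y^2 - d*y₁^2 = x^2 - x₁^2 := by linarith
            have h11 : d*y₁^2 < d*y^2 := by linarith
            exact lt_of_mul_lt_mul_left (by linarith) hd.le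
          have hyy₁ : y₁ < y := lt_of_pow_lt_pow_left₀ 2 hy.le hy2lt
          obtain ⟨hdv1, hdv2⟩ := pell4_parity d x y x₁ (-y₁) hxy (by linear_combination h₁)
          obtain ⟨X, hX⟩ := hdv1
          obtain ⟨Y, hY⟩ := hdv2
          have h2X : 2 * X = x * x₁ - d * y * y₁ := by linear_combination -hX
          have h2Y : 2 * Y = x₁ * y - x * y₁ := by linear_combination -hY
          have hdyy : 0 < d * y * y₁ := mul_pos (mul_pos hd hy) hy₁
          -- X > 0
          have h8 : (x*x₁)^2 - (d*y*y₁)^2 = 4*d*y^2 + 4*d*y₁^2 + 16 := by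
            linear_combination x₁^2*hxy + (d*y^2+4)*h₁
          have h8' : (d*y*y₁)^2 < (x*x₁)^2 := by
            nlinarith [mul_pos hd (pow_pos hy 2), mul_pos hd (pow_pos hy₁ 2)]
          have hXx : d*y*y₁ < x*x₁ := lt_of_pow_lt_pow_left₀ 2 (mul_pos hx hx₁).le h8'
          have hXpos : 0 < X := by linarith
          -- Y > 0
          have h7 : (x₁*y)^2 - (x*y₁)^2 = 4*(y^2 - y₁^2) := by
            linear_combination y^2*h₁ - y₁^2*hxy
          have h7' : (x*y₁)^2 < (x₁*y)^2 := by nlinarith [hy2lt]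
          have hYy : x*y₁ < x₁*y := lt_of_pow_lt_pow_left₀ 2 (mul_pos hx₁ hy).le h7'
          have hYpos : 0 < Y := by linarith
          -- norm
          have h16 : (2*X)^2 - d*(2*Y)^2 = 16 := by
            rw [h2X, h2Y]
            linear_combination (x₁^2 - d*y₁^2)*hxy + 4*h₁
          have h17 : 4*(X^2 - d*Y^2) = 16 := by linear_combination h16
          have hnorm : X ^ 2 - d * Y ^ 2 = 4 := by linarith
          -- X < x
          have hx4 : 4 ≤ x := by omega
          have h9 : (d*y*y₁)^2 - (x*(x₁-2))^2 = (x₁-2)*(4*x^2 - 4*x₁ - 8) := by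
            linear_combination (-(d*y₁^2))*hxy + (-(x^2-4))*h₁
          have hx2 : 4*x ≤ x^2 := by
            rw [sq]; exact mul_le_mul_of_nonneg_right hx4 hx.le
          have hb : 0 < 4*x^2 - 4*x₁ - 8 := by linarith
          have hpos : 0 < (x₁-2)*(4*x^2 - 4*x₁ - 8) :=
            mul_pos (by omega) hb
          have h9' : (x*(x₁-2))^2 < (d*y*y₁)^2 := by linarith
          have hlt : x*(x₁-2) < d*y*y₁ := lt_of_pow_lt_pow_left₀ 2 hdyy.le h9'
          have hXlt : X < x := by
            have hring : x*x₁ - x*(x₁-2) = 2*x := by ring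
            linarith
          obtain ⟨n, hn1, hnr⟩ := IH X Y hXpos hYpos hnorm (by omega)
          -- recombine
          have hxr : 2*(X*x₁ + d*Y*y₁) = 4*x := by
            linear_combination x₁*h2X + d*y₁*h2Y + x*h₁
          have hyr : 2*(X*y₁ + x₁*Y) = 4*y := by
            linear_combination y₁*h2X + x₁*h2Y + y*h₁
          have hxrR : 2*((X:ℝ)*x₁ + d*Y*y₁) = 4*x := by
            exact_mod_cast congrArg (Int.cast : ℤ → ℝ) hxr
          have hyrR : 2*((X:ℝ)*y₁ + x₁*Y) = 4*y := by
            exact_mod_cast congrArg (Int.cast : ℤ → ℝ) hyr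
          have key : (x:ℝ) + y * Real.sqrt d =
              ((X:ℝ) + Y * Real.sqrt d) * ((x₁:ℝ) + y₁ * Real.sqrt d) / 2 := by
            rw [eq_div_iff h2R]
            linear_combination (-1/2:ℝ)*hxrR - (Real.sqrt d/2) * hyrR - (Y:ℝ)*y₁*hsq
          refine ⟨n + 1, by omega, ?_⟩
          rw [key, hnr]
          obtain ⟨m, rfl⟩ : ∃ m, n = m + 1 := ⟨n - 1, by omega⟩
          simp only [Nat.add_sub_cancel]
          rw [pow_succ]
          ring
    intro x y hx hy hxy
    exact comp x.toNat x y hx hy hxy (by simp [Int.self_le_toNat])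
end

section
/- Let d be a positive integer that is not a perfect square, and suppose (x₁, y₁) is the fundamental solution of x² − d·y² = −4 (i.e., a positive integer solution with minimal x₁). Then for every n ≥ 1 there exist positive integers x_n, y_n with x_n² − d·y_n² = −4 and x_n + y_n√d = (x₁ + y₁√d)²ⁿ⁻¹ / 2²ⁿ⁻² (as real numbers), and every positive integer solution of x² − d·y² = −4 arises this way for some n ≥ 1. -/
/-!
To a solution `(x, y)` of `x² − dy² = −4` attach `β = (x + y√d)/2`. Its conjugate is `−β⁻¹`, so
`x = β − β⁻¹` and `y√d = β + β⁻¹`: the solution is positive iff `β > 1`, and `x` increases with `β`.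
Hence `ε = (x₁ + y₁√d)/2` is the least `β > 1` coming from a solution. Multiplying `β` by `ε²` or
by `ε⁻²` again gives a solution (the new coordinates are integers by a parity check), so all
`ε²ᵐ⁺¹` come from solutions. Conversely, if `β > ε` then `β' = β/ε²` comes from a solution
`(a, b)` with `ε⁻¹ < β' < β`; here `β' = 1` would force `a = 0` and `d b² = 4`, and `β' < 1` would make
`β'⁻¹ = (−a + b√d)/2 ∈ (1, ε)`, contradicting minimality. So `β' > 1`, and descent on `x` finishes.
-/

open Real

lemma Int.isSquare_of_mul_sq_eq_sq {d y c : ℤ} (hy : y ≠ 0) (h : d * y ^ 2 = c ^ 2) :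
    IsSquare d := by
  obtain ⟨k, rfl⟩ : y ∣ c := (Int.pow_dvd_pow_iff two_ne_zero).mp ⟨d, by rw [← h]; ring⟩
  exact ⟨k, mul_right_cancel₀ (pow_ne_zero 2 hy) (by linear_combination h)⟩

lemma strictMonoOn_sub_inv : StrictMonoOn (fun t : ℝ => t - t⁻¹) (Set.Ioi 0) :=
  fun _ ha _ hb hab => by
    have := inv_strictAntiOn ha hb hab
    dsimp only at this ⊢
    linarith

namespace PellNegFour

noncomputable def realHalf (d x y : ℤ) : ℝ := (x + y * √d) / 2

variable {d x y : ℤ}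

lemma pos_of_sq_sub_mul_sq_eq_neg_four (h : x ^ 2 - d * y ^ 2 = -4) : 0 < d := by
  nlinarith [sq_nonneg x, sq_nonneg y]

lemma sq_sqrt_of_sq_sub_mul_sq_eq_neg_four (h : x ^ 2 - d * y ^ 2 = -4) : √(d : ℝ) ^ 2 = d :=
  Real.sq_sqrt (by exact_mod_cast (pos_of_sq_sub_mul_sq_eq_neg_four h).le)

lemma intCast_zmod_two_eq (h : x ^ 2 - d * y ^ 2 = -4) : (x : ZMod 2) = d * y := by
  have h2 := congrArg (Int.cast : ℤ → ZMod 2) h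
  push_cast at h2
  revert h2
  generalize (x : ZMod 2) = X, (d : ZMod 2) = D, (y : ZMod 2) = Y
  revert X D Y
  decide

lemma realHalf_mul_realHalf_neg (h : x ^ 2 - d * y ^ 2 = -4) :
    realHalf d x y * realHalf d (-x) y = 1 := by
  have hs := sq_sqrt_of_sq_sub_mul_sq_eq_neg_four h
  have hR : (x : ℝ) ^ 2 - d * y ^ 2 = -4 := by exact_mod_cast h
  unfold realHalf
  push_cast
  linear_combination (y ^ 2 * hs - hR) / 4

lemma realHalf_neg (h : x ^ 2 - d * y ^ 2 = -4) : realHalf d (-x) y = (realHalf d x y)⁻¹ :=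
  (eq_inv_of_mul_eq_one_right (realHalf_mul_realHalf_neg h))

lemma eq_realHalf_sub_inv (h : x ^ 2 - d * y ^ 2 = -4) :
    (x : ℝ) = realHalf d x y - (realHalf d x y)⁻¹ := by
  rw [← realHalf_neg h]
  unfold realHalf
  push_cast
  ring

lemma one_lt_realHalf_iff (h : x ^ 2 - d * y ^ 2 = -4) : 1 < realHalf d x y ↔ 0 < x ∧ 0 < y := by
  have hx := eq_realHalf_sub_inv h
  have hy : (y : ℝ) * √d = realHalf d x y + (realHalf d x y)⁻¹ := by
    rw [← realHalf_neg h]; unfold realHalf; push_cast; ring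
  constructor
  · intro hβ
    have hinv : (realHalf d x y)⁻¹ < 1 := inv_lt_one_of_one_lt₀ hβ
    have hinv0 : 0 < (realHalf d x y)⁻¹ := inv_pos.mpr (by linarith)
    refine ⟨by exact_mod_cast (show (0 : ℝ) < x by linarith), ?_⟩
    exact_mod_cast pos_of_mul_pos_left (show (0 : ℝ) < y * √d by linarith) (Real.sqrt_nonneg _)
  · rintro ⟨hx0, hy0⟩
    have hβ : 0 < realHalf d x y := by
      unfold realHalf
      have : (0 : ℝ) < x := by exact_mod_cast hx0
      have : (0 : ℝ) ≤ y * √d := mul_nonneg (by exact_mod_cast hy0.le) (Real.sqrt_nonneg _)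
      linarith
    by_contra hle
    have := (one_le_inv₀ hβ).mpr (not_lt.mp hle)
    have : (0 : ℝ) < x := by exact_mod_cast hx0
    linarith

lemma realHalf_le_realHalf_iff {a b : ℤ} (h : x ^ 2 - d * y ^ 2 = -4) (h' : a ^ 2 - d * b ^ 2 = -4)
    (hβ : 0 < realHalf d x y) (hβ' : 0 < realHalf d a b) :
    realHalf d x y ≤ realHalf d a b ↔ x ≤ a := by
  rw [← strictMonoOn_sub_inv.le_iff_le hβ hβ', ← Int.cast_le (R := ℝ),
    eq_realHalf_sub_inv h, eq_realHalf_sub_inv h']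

lemma realHalf_ne_one (hds : ¬ IsSquare d) (h : x ^ 2 - d * y ^ 2 = -4) : realHalf d x y ≠ 1 := by
  intro h1
  have hx : (x : ℝ) = 0 := by rw [eq_realHalf_sub_inv h, h1]; norm_num
  obtain rfl : x = 0 := by exact_mod_cast hx
  refine hds (Int.isSquare_of_mul_sq_eq_sq (y := y) (c := 2) ?_ (by linear_combination -h))
  rintro rfl
  norm_num at h

lemma exists_realHalf_eq_mul_sq {x₁ y₁ : ℤ} (h : x ^ 2 - d * y ^ 2 = -4)
    (h₁ : x₁ ^ 2 - d * y₁ ^ 2 = -4) :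
    ∃ a b : ℤ, a ^ 2 - d * b ^ 2 = -4 ∧ realHalf d a b = realHalf d x y * realHalf d x₁ y₁ ^ 2 := by
  have hx := intCast_zmod_two_eq h
  have hx₁ := intCast_zmod_two_eq h₁
  have parity : ∀ D Y Y₁ : ZMod 2, D * Y * ((D * Y₁) ^ 2 + 2) + D * Y * (D * Y₁ * Y₁) = 0 ∧
      Y * ((D * Y₁) ^ 2 + 2) + D * Y * (D * Y₁ * Y₁) = 0 := by decide
  obtain ⟨a, ha⟩ : (2 : ℤ) ∣ x * (x₁ ^ 2 + 2) + d * y * (x₁ * y₁) := by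
    refine (ZMod.intCast_zmod_eq_zero_iff_dvd _ 2).mp ?_
    push_cast; rw [hx, hx₁]; exact (parity _ _ _).1
  obtain ⟨b, hb⟩ : (2 : ℤ) ∣ y * (x₁ ^ 2 + 2) + x * (x₁ * y₁) := by
    refine (ZMod.intCast_zmod_eq_zero_iff_dvd _ 2).mp ?_
    push_cast; rw [hx, hx₁]; exact (parity _ _ _).2
  refine ⟨a, b, ?_, ?_⟩
  · have : (2 * a) ^ 2 - d * (2 * b) ^ 2 = -16 := by
      rw [← ha, ← hb]
      linear_combination ((x₁ ^ 2 + 2) ^ 2 - d * (x₁ * y₁) ^ 2) * h - 4 * x₁ ^ 2 * h₁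
    linarith
  · have hs := sq_sqrt_of_sq_sub_mul_sq_eq_neg_four h
    have h₁R : (x₁ : ℝ) ^ 2 - d * y₁ ^ 2 = -4 := by exact_mod_cast h₁
    have haR : (x : ℝ) * (x₁ ^ 2 + 2) + d * y * (x₁ * y₁) = 2 * a := by exact_mod_cast ha
    have hbR : (y : ℝ) * (x₁ ^ 2 + 2) + x * (x₁ * y₁) = 2 * b := by exact_mod_cast hb
    unfold realHalf
    -- `(x₁ + y₁√d)² = 2((x₁² + 2) + x₁y₁√d)`
    linear_combination (-haR - √d * hbR - y * x₁ * y₁ * hs) / 4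
      - (x + y * √d) / 8 * (y₁ ^ 2 * hs - h₁R)

lemma add_mul_sqrt_eq_pow_div_iff {x₁ y₁ : ℤ} {n : ℕ} (hn : 1 ≤ n) :
    (x : ℝ) + y * √d = ((x₁ : ℝ) + y₁ * √d) ^ (2 * n - 1) / 2 ^ (2 * n - 2) ↔
      realHalf d x y = realHalf d x₁ y₁ ^ (2 * n - 1) := by
  obtain ⟨k, hk, hk'⟩ : ∃ k, 2 * n - 1 = k + 1 ∧ 2 * n - 2 = k := ⟨2 * n - 2, by omega, rfl⟩
  rw [hk, hk', realHalf, realHalf, div_pow, pow_succ 2 k, ← div_div, div_left_inj' two_ne_zero]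

section Fundamental

variable {x₁ y₁ : ℤ}

lemma exists_realHalf_eq_pow (hx₁ : 0 < x₁) (hy₁ : 0 < y₁) (h₁ : x₁ ^ 2 - d * y₁ ^ 2 = -4)
    (m : ℕ) : ∃ x y : ℤ, 0 < x ∧ 0 < y ∧ x ^ 2 - d * y ^ 2 = -4 ∧
      realHalf d x y = realHalf d x₁ y₁ ^ (2 * m + 1) := by
  have hε : 1 < realHalf d x₁ y₁ := (one_lt_realHalf_iff h₁).mpr ⟨hx₁, hy₁⟩
  induction m with
  | zero => exact ⟨x₁, y₁, hx₁, hy₁, h₁, by simp⟩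
  | succ m ih =>
    obtain ⟨x, y, hx, hy, h, hβ⟩ := ih
    obtain ⟨a, b, hab, hβ'⟩ := exists_realHalf_eq_mul_sq h h₁
    have hβ1 : 1 < realHalf d x y := (one_lt_realHalf_iff h).mpr ⟨hx, hy⟩
    obtain ⟨ha, hb⟩ := (one_lt_realHalf_iff hab).mp
      (hβ' ▸ one_lt_mul_of_lt_of_le hβ1 (one_le_pow₀ hε.le))
    exact ⟨a, b, ha, hb, hab, by rw [hβ', hβ]; ring⟩

lemma exists_lt_of_realHalf_lt (hds : ¬ IsSquare d) (hx₁ : 0 < x₁) (hy₁ : 0 < y₁)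
    (h₁ : x₁ ^ 2 - d * y₁ ^ 2 = -4)
    (hmin : ∀ x y : ℤ, 0 < x → 0 < y → x ^ 2 - d * y ^ 2 = -4 → x₁ ≤ x)
    (h : x ^ 2 - d * y ^ 2 = -4) (hlt : realHalf d x₁ y₁ < realHalf d x y) :
    ∃ a b : ℤ, 0 < a ∧ 0 < b ∧ a ^ 2 - d * b ^ 2 = -4 ∧ a < x ∧
      realHalf d a b * realHalf d x₁ y₁ ^ 2 = realHalf d x y := by
  obtain ⟨a, b, hab, hβ'⟩ :=
    exists_realHalf_eq_mul_sq h (by linear_combination h₁ : (-x₁) ^ 2 - d * y₁ ^ 2 = -4)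
  rw [realHalf_neg h₁] at hβ'
  set ε := realHalf d x₁ y₁
  have hε : 1 < ε := (one_lt_realHalf_iff h₁).mpr ⟨hx₁, hy₁⟩
  have hdesc : realHalf d a b * ε ^ 2 = realHalf d x y := by
    rw [hβ']; field_simp
  have hinv : ε⁻¹ < realHalf d a b := by
    rw [hβ']
    calc ε⁻¹ = ε * ε⁻¹ ^ 2 := by field_simp
      _ < _ := mul_lt_mul_of_pos_right hlt (by positivity)
  have hβ'0 : 0 < realHalf d a b := (inv_pos.mpr (by linarith)).trans hinv
  have hβ'1 : 1 < realHalf d a b := by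
    by_contra hle
    have hlt1 : realHalf d a b < 1 := (not_lt.mp hle).lt_of_ne (realHalf_ne_one hds hab)
    have hab' : (-a) ^ 2 - d * b ^ 2 = -4 := by linear_combination hab
    have hγ : 1 < realHalf d (-a) b := by
      rw [realHalf_neg hab]; exact (one_lt_inv₀ hβ'0).mpr hlt1
    obtain ⟨ha', hb'⟩ := (one_lt_realHalf_iff hab').mp hγ
    have hεγ := (realHalf_le_realHalf_iff h₁ hab' (by linarith) (by linarith)).mpr
      (hmin _ _ ha' hb' hab')
    rw [realHalf_neg hab] at hεγ
    have := (inv_lt_comm₀ (by linarith) (by linarith)).mp hinv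
    linarith
  obtain ⟨ha, hb⟩ := (one_lt_realHalf_iff hab).mp hβ'1
  refine ⟨a, b, ha, hb, hab, ?_, hdesc⟩
  have hβ'β : realHalf d a b < realHalf d x y := by
    rw [← hdesc]; exact lt_mul_of_one_lt_right (by linarith) (one_lt_pow₀ hε two_ne_zero)
  exact lt_of_not_ge fun hle => hβ'β.not_ge
    ((realHalf_le_realHalf_iff h hab (by linarith) (by linarith)).mpr hle)

theorem exists_realHalf_eq_pow_of_pos (hds : ¬ IsSquare d) (hx₁ : 0 < x₁) (hy₁ : 0 < y₁)
    (h₁ : x₁ ^ 2 - d * y₁ ^ 2 = -4)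
    (hmin : ∀ x y : ℤ, 0 < x → 0 < y → x ^ 2 - d * y ^ 2 = -4 → x₁ ≤ x)
    (x y : ℤ) (hx : 0 < x) (hy : 0 < y) (h : x ^ 2 - d * y ^ 2 = -4) :
    ∃ m : ℕ, realHalf d x y = realHalf d x₁ y₁ ^ (2 * m + 1) := by
  have hε : 1 < realHalf d x₁ y₁ := (one_lt_realHalf_iff h₁).mpr ⟨hx₁, hy₁⟩
  have hβ : 1 < realHalf d x y := (one_lt_realHalf_iff h).mpr ⟨hx, hy⟩
  rcases ((realHalf_le_realHalf_iff h₁ h (by linarith) (by linarith)).mpr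
    (hmin x y hx hy h)).eq_or_lt with heq | hlt
  · exact ⟨0, by simp [heq]⟩
  · obtain ⟨a, b, ha, hb, hab, hax, hdesc⟩ := exists_lt_of_realHalf_lt hds hx₁ hy₁ h₁ hmin h hlt
    obtain ⟨m, hm⟩ := exists_realHalf_eq_pow_of_pos hds hx₁ hy₁ h₁ hmin a b ha hb hab
    exact ⟨m + 1, by rw [← hdesc, hm]; ring⟩
termination_by x.toNat
decreasing_by omega

end Fundamental

end PellNegFour

open PellNegFour

theorem pell_neg_four_all_solutions_general (d : ℤ) (hds : ¬ IsSquare d)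
    (x₁ y₁ : ℤ) (hx₁ : 0 < x₁) (hy₁ : 0 < y₁) (h₁ : x₁ ^ 2 - d * y₁ ^ 2 = -4)
    (hmin : ∀ x y : ℤ, 0 < x → 0 < y → x ^ 2 - d * y ^ 2 = -4 → x₁ ≤ x) :
    (∀ n : ℕ, 1 ≤ n → ∃ x y : ℤ, 0 < x ∧ 0 < y ∧ x ^ 2 - d * y ^ 2 = -4 ∧
      (x : ℝ) + (y : ℝ) * Real.sqrt d =
        ((x₁ : ℝ) + (y₁ : ℝ) * Real.sqrt d) ^ (2 * n - 1) / 2 ^ (2 * n - 2)) ∧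
    (∀ x y : ℤ, 0 < x → 0 < y → x ^ 2 - d * y ^ 2 = -4 →
      ∃ n : ℕ, 1 ≤ n ∧ (x : ℝ) + (y : ℝ) * Real.sqrt d =
        ((x₁ : ℝ) + (y₁ : ℝ) * Real.sqrt d) ^ (2 * n - 1) / 2 ^ (2 * n - 2)) := by
  refine ⟨fun n hn => ?_, fun x y hx hy h => ?_⟩
  · obtain ⟨x, y, hx, hy, h, hxy⟩ := exists_realHalf_eq_pow hx₁ hy₁ h₁ (n - 1)
    refine ⟨x, y, hx, hy, h, (add_mul_sqrt_eq_pow_div_iff hn).mpr ?_⟩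
    rwa [show 2 * n - 1 = 2 * (n - 1) + 1 by omega]
  · obtain ⟨m, hm⟩ := exists_realHalf_eq_pow_of_pos hds hx₁ hy₁ h₁ hmin x y hx hy h
    refine ⟨m + 1, by omega, (add_mul_sqrt_eq_pow_div_iff (by omega)).mpr ?_⟩
    rwa [show 2 * (m + 1) - 1 = 2 * m + 1 by omega]

/-- Let `d` be a positive nonsquare integer and `(x₁, y₁)` the fundamental solution of
`x² − dy² = −4` (a positive integer solution with minimal `x₁`). Then for every `n ≥ 1`
there is a positive integer solution `(xₙ, yₙ)` with
`xₙ + yₙ√d = (x₁ + y₁√d)²ⁿ⁻¹ / 2²ⁿ⁻²`, and every positive integer solution arises this way. -/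
theorem pell_neg_four_all_solutions (d : ℤ) (hd : 0 < d) (hds : ¬ IsSquare d)
    (x₁ y₁ : ℤ) (hx₁ : 0 < x₁) (hy₁ : 0 < y₁) (h₁ : x₁ ^ 2 - d * y₁ ^ 2 = -4)
    (hmin : ∀ x y : ℤ, 0 < x → 0 < y → x ^ 2 - d * y ^ 2 = -4 → x₁ ≤ x) :
    (∀ n : ℕ, 1 ≤ n → ∃ x y : ℤ, 0 < x ∧ 0 < y ∧ x ^ 2 - d * y ^ 2 = -4 ∧
      (x : ℝ) + (y : ℝ) * Real.sqrt d =
        ((x₁ : ℝ) + (y₁ : ℝ) * Real.sqrt d) ^ (2 * n - 1) / 2 ^ (2 * n - 2)) ∧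
    (∀ x y : ℤ, 0 < x → 0 < y → x ^ 2 - d * y ^ 2 = -4 →
      ∃ n : ℕ, 1 ≤ n ∧ (x : ℝ) + (y : ℝ) * Real.sqrt d =
        ((x₁ : ℝ) + (y₁ : ℝ) * Real.sqrt d) ^ (2 * n - 1) / 2 ^ (2 * n - 2)) :=
  pell_neg_four_all_solutions_general d hds x₁ y₁ hx₁ hy₁ h₁ hmin
end
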